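/- arXiv:1511.07907 — 4 statements merged into one kernel-verified Lean document; each statement's English description precedes it below -/
import Mathlib

section
/- Under the setting of the indifference-point equation, the unique root x* of k_p·d·Δp + k_l·(2x−x1−x2) + k_q·(q1(x+L) − q2(L−x)) = 0 is strictly decreasing in the price difference Δp = p1 − p2: if Δp' > Δp and x*(Δp'), x*(Δp) are the corresponding roots, then x*(Δp') < x*(Δp). -/
/-! Without the price term the left-hand side of the indifference equation is strictly increasing
in `x` (a strictly increasing linear part plus a monotone part), so raising the price term forces
the root down. -/

theorem strictMono_indifference_lhs (kl kq x1 x2 L : ℝ) (hkl : 0 < kl) (hkq : 0 ≤ kq)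
    {q1 q2 : ℝ → ℝ} (hq1 : Monotone q1) (hq2 : Monotone q2) :
    StrictMono fun x => kl * (2 * x - x1 - x2) + kq * (q1 (x + L) - q2 (L - x)) := by
  have hlin : StrictMono fun x : ℝ => kl * (2 * x - x1 - x2) := fun _ _ hxy =>
    mul_lt_mul_of_pos_left (by linarith) hkl
  have hq : Monotone fun x => q1 (x + L) - q2 (L - x) := fun x y hxy =>
    sub_le_sub (hq1 (add_le_add_left hxy L)) (hq2 (sub_le_sub_left hxy L))
  exact hlin.add_monotone (hq.const_mul hkq)

theorem StrictMono.lt_of_mul_add_eq_zero {β : Type*} [LinearOrder β] {g : β → ℝ}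
    (hg : StrictMono g) {c a a' : ℝ} {x x' : β} (hc : 0 < c) (ha : a < a')
    (h : c * a + g x = 0) (h' : c * a' + g x' = 0) : x' < x :=
  hg.lt_iff_lt.mp (by linarith [mul_lt_mul_of_pos_left ha hc])

theorem indifference_point_strictly_decreasing_in_price_difference_general
    (kp kl kq d L x1 x2 : ℝ)
    (hkp : 0 < kp) (hkl : 0 < kl) (hkq : 0 < kq) (hd : 0 < d)
    (q1 q2 : ℝ → ℝ)
    (hq1 : Monotone q1) (hq2 : Monotone q2)
    (Δp Δp' xs xs' : ℝ)
    (hΔ : Δp < Δp')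
    (hroot : kp * d * Δp + kl * (2 * xs - x1 - x2)
        + kq * (q1 (xs + L) - q2 (L - xs)) = 0)
    (hroot' : kp * d * Δp' + kl * (2 * xs' - x1 - x2)
        + kq * (q1 (xs' + L) - q2 (L - xs')) = 0) :
    xs' < xs :=
  (strictMono_indifference_lhs kl kq x1 x2 L hkl hkq.le hq1 hq2).lt_of_mul_add_eq_zero
    (mul_pos hkp hd) hΔ (by rw [← add_assoc]; exact hroot) (by rw [← add_assoc]; exact hroot')

theorem indifference_point_strictly_decreasing_in_price_difference
    (kp kl kq d L x1 x2 : ℝ)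
    (hkp : 0 < kp) (hkl : 0 < kl) (hkq : 0 < kq) (hd : 0 < d)
    (hL : 0 < L) (hx1 : -L < x1) (hx : x1 < x2) (hx2 : x2 < L)
    (q1 q2 : ℝ → ℝ)
    (hq1c : Continuous q1) (hq2c : Continuous q2)
    (hq1 : Monotone q1) (hq2 : Monotone q2)
    (Δp Δp' xs xs' : ℝ)
    (hΔ : Δp < Δp')
    (hxs : xs ∈ Set.Ioo x1 x2) (hxs' : xs' ∈ Set.Ioo x1 x2)
    (hroot : kp * d * Δp + kl * (2 * xs - x1 - x2)
        + kq * (q1 (xs + L) - q2 (L - xs)) = 0)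
    (hroot' : kp * d * Δp' + kl * (2 * xs' - x1 - x2)
        + kq * (q1 (xs' + L) - q2 (L - xs')) = 0) :
    xs' < xs :=
  indifference_point_strictly_decreasing_in_price_difference_general kp kl kq d L x1 x2 hkp hkl hkq
    hd q1 q2 hq1 hq2 Δp Δp' xs xs' hΔ hroot hroot'
end

section
/- Let g(ω) = k_p·d·(p1−p2) + k_l·(x1−x2) + k_q·(q1((x1+L)·ω) − q2(L−x1+(x1+L)·(1−ω))), where q1, q2 are continuous nondecreasing functions. If θ1R ≤ p1−p2 < θ2R, where θ2R = (k_q·q2(2L) + k_l·(x2−x1))/(k_p·d) and θ1R = (k_q·(q2(L−x1)−q1(x1+L)) + k_l·(x2−x1))/(k_p·d), then g has a unique root ω1 in [0,1]. -/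
/-! The function g is continuous and strictly increasing, since `kq > 0` and `x1 + L > 0`;
the bounds `θ1R ≤ p1 - p2 < θ2R` say exactly that `g 0 < 0 ≤ g 1`. The intermediate value
theorem gives a root and strict monotonicity makes it unique. -/

open Set

theorem StrictMonoOn.existsUnique_mem_Icc_eq {α δ : Type*} [ConditionallyCompleteLinearOrder α]
    [TopologicalSpace α] [OrderTopology α] [DenselyOrdered α] [LinearOrder δ] [TopologicalSpace δ]
    [OrderClosedTopology δ] {f : α → δ} {a b : α} {y : δ} (hab : a ≤ b)
    (hc : ContinuousOn f (Icc a b)) (hf : StrictMonoOn f (Icc a b)) (hy : y ∈ Icc (f a) (f b)) :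
    ∃! x, x ∈ Icc a b ∧ f x = y := by
  obtain ⟨x, hx, rfl⟩ := intermediate_value_Icc hab hc hy
  exact ⟨x, ⟨hx, rfl⟩, fun x' ⟨hx', hfx'⟩ => hf.injOn hx' hx hfx'⟩

theorem strictMono_sub_comp_affine {q₁ q₂ : ℝ → ℝ} (hq₁ : StrictMono q₁) (hq₂ : StrictMono q₂)
    {a : ℝ} (ha : 0 < a) (b : ℝ) :
    StrictMono fun ω => q₁ (a * ω) - q₂ (b + a * (1 - ω)) := by
  intro u v huv
  have h₁ : q₁ (a * u) < q₁ (a * v) := hq₁ (mul_lt_mul_of_pos_left huv ha)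
  have h₂ : q₂ (b + a * (1 - v)) < q₂ (b + a * (1 - u)) := hq₂ (by nlinarith)
  linarith

theorem mixed_strategy_unique_root_general
    (kp kl kq d L x1 x2 p1 p2 : ℝ)
    (hkp : 0 < kp) (hkq : 0 < kq) (hd : 0 < d)
    (hx1 : -L < x1)
    (q1 q2 : ℝ → ℝ)
    (hq1c : Continuous q1) (hq2c : Continuous q2)
    (hq1 : StrictMono q1) (hq2 : StrictMono q2)
    (hq10 : q1 0 = 0)
    (θ1R θ2R : ℝ)
    (hθ1R : θ1R = (kq * (q2 (L - x1) - q1 (x1 + L)) + kl * (x2 - x1)) / (kp * d))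
    (hθ2R : θ2R = (kq * q2 (2 * L) + kl * (x2 - x1)) / (kp * d))
    (hlo : θ1R ≤ p1 - p2) (hhi : p1 - p2 < θ2R) :
    ∃! ω : ℝ, ω ∈ Set.Icc (0 : ℝ) 1 ∧
      kp * d * (p1 - p2) + kl * (x1 - x2)
        + kq * (q1 ((x1 + L) * ω) - q2 (L - x1 + (x1 + L) * (1 - ω))) = 0 := by
  have hkpd : 0 < kp * d := mul_pos hkp hd
  rw [hθ1R, div_le_iff₀ hkpd] at hlo
  rw [hθ2R, lt_div_iff₀ hkpd] at hhi
  have hmono := ((strictMono_sub_comp_affine hq1 hq2 (by linarith : 0 < x1 + L) (L - x1)).const_mul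
    hkq).const_add (kp * d * (p1 - p2) + kl * (x1 - x2))
  refine hmono.strictMonoOn _ |>.existsUnique_mem_Icc_eq zero_le_one (by fun_prop) ⟨?_, ?_⟩
  · have h2L : L - x1 + (x1 + L) * (1 - 0) = 2 * L := by ring
    simp only [mul_zero, hq10, h2L]
    linarith
  · simp only [mul_one, sub_self, mul_zero, add_zero]
    linarith

theorem mixed_strategy_unique_root
    (kp kl kq d L x1 x2 p1 p2 : ℝ)
    (hkp : 0 < kp) (hkl : 0 < kl) (hkq : 0 < kq) (hd : 0 < d)
    (hL : 0 < L) (hx1 : -L < x1) (hx : x1 < x2) (hx2 : x2 < L)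
    (q1 q2 : ℝ → ℝ)
    (hq1c : Continuous q1) (hq2c : Continuous q2)
    (hq1 : StrictMono q1) (hq2 : StrictMono q2)
    (hq10 : q1 0 = 0) (hq20 : q2 0 = 0)
    (θ1R θ2R : ℝ)
    (hθ1R : θ1R = (kq * (q2 (L - x1) - q1 (x1 + L)) + kl * (x2 - x1)) / (kp * d))
    (hθ2R : θ2R = (kq * q2 (2 * L) + kl * (x2 - x1)) / (kp * d))
    (hlo : θ1R ≤ p1 - p2) (hhi : p1 - p2 < θ2R) :
    ∃! ω : ℝ, ω ∈ Set.Icc (0 : ℝ) 1 ∧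
      kp * d * (p1 - p2) + kl * (x1 - x2)
        + kq * (q1 ((x1 + L) * ω) - q2 (L - x1 + (x1 + L) * (1 - ω))) = 0 :=
  mixed_strategy_unique_root_general kp kl kq d L x1 x2 p1 p2 hkp hkq hd hx1 q1 q2 hq1c hq2c hq1 hq2
    hq10 θ1R θ2R hθ1R hθ2R hlo hhi
end

section
/- The mixed-strategy probability ω1, defined implicitly as the root in [0,1] of k_p·d·Δp + k_l·(x1−x2) + k_q·(q1((x1+L)·ω) − q2(L−x1+(x1+L)(1−ω))) = 0, is strictly decreasing in the price difference Δp = p1−p2. -/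
theorem monotone_sub_comp_mul_complement {q1 q2 : ℝ → ℝ} (hq1 : Monotone q1) (hq2 : Monotone q2)
    {a : ℝ} (ha : 0 ≤ a) (b : ℝ) :
    Monotone fun ω => q1 (a * ω) - q2 (b + a * (1 - ω)) := fun ω ω' hle =>
  sub_le_sub (hq1 (by gcongr)) (hq2 (by gcongr))

theorem lt_of_linear_add_monotone_eq_zero {F : ℝ → ℝ} (hF : Monotone F)
    {α Δ Δ' ω ω' : ℝ} (hα : 0 < α) (hΔ : Δ < Δ')
    (h : α * Δ + F ω = 0) (h' : α * Δ' + F ω' = 0) : ω' < ω := by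
  by_contra! hle
  linarith [hF hle, mul_lt_mul_of_pos_left hΔ hα]

theorem mixed_strategy_prob_strictly_decreasing_general
    (kp kl kq d L x1 x2 : ℝ)
    (hkp : 0 < kp) (hkq : 0 < kq) (hd : 0 < d)
    (hx1 : -L < x1)
    (q1 q2 : ℝ → ℝ)
    (hq1 : StrictMono q1) (hq2 : StrictMono q2)
    (Δp Δp' ω ω' : ℝ) (hΔ : Δp < Δp')
    (hroot : kp * d * Δp + kl * (x1 - x2)
        + kq * (q1 ((x1 + L) * ω) - q2 (L - x1 + (x1 + L) * (1 - ω))) = 0)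
    (hroot' : kp * d * Δp' + kl * (x1 - x2)
        + kq * (q1 ((x1 + L) * ω') - q2 (L - x1 + (x1 + L) * (1 - ω'))) = 0) :
    ω' < ω := by
  have hq : Monotone fun ω => q1 ((x1 + L) * ω) - q2 (L - x1 + (x1 + L) * (1 - ω)) :=
    monotone_sub_comp_mul_complement hq1.monotone hq2.monotone (by linarith) _
  rw [add_assoc] at hroot hroot'
  exact lt_of_linear_add_monotone_eq_zero (monotone_const.add (hq.const_mul hkq.le))
    (mul_pos hkp hd) hΔ hroot hroot'

theorem mixed_strategy_prob_strictly_decreasing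
    (kp kl kq d L x1 x2 : ℝ)
    (hkp : 0 < kp) (hkl : 0 < kl) (hkq : 0 < kq) (hd : 0 < d)
    (hL : 0 < L) (hx1 : -L < x1) (hx : x1 < x2) (hx2 : x2 < L)
    (q1 q2 : ℝ → ℝ)
    (hq1 : StrictMono q1) (hq2 : StrictMono q2)
    (Δp Δp' ω ω' : ℝ) (hΔ : Δp < Δp')
    (hω : ω ∈ Set.Icc (0 : ℝ) 1) (hω' : ω' ∈ Set.Icc (0 : ℝ) 1)
    (hroot : kp * d * Δp + kl * (x1 - x2)
        + kq * (q1 ((x1 + L) * ω) - q2 (L - x1 + (x1 + L) * (1 - ω))) = 0)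
    (hroot' : kp * d * Δp' + kl * (x1 - x2)
        + kq * (q1 ((x1 + L) * ω') - q2 (L - x1 + (x1 + L) * (1 - ω'))) = 0) :
    ω' < ω :=
  mixed_strategy_prob_strictly_decreasing_general kp kl kq d L x1 x2 hkp hkq hd hx1 q1 q2 hq1 hq2 Δp
    Δp' ω ω' hΔ hroot hroot'
end

section
/- Uniqueness of the pricing equilibrium: let B1, B2 : [a,b] → [a,b] be monotone nondecreasing and suppose that for each i, the map p ↦ B_i(p) − p is strictly decreasing on [a,b]. Then there is at most one p* ∈ [a,b] with B1(B2(p*)) = p*. -/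
/-!
Write `B₁ (B₂ p) - p = (B₁ (B₂ p) - B₂ p) + (B₂ p - p)`. The first summand is antitone in `p`,
being the antitone offset of `B₁` evaluated along the monotone `B₂`, and the second is strictly
antitone. Hence `p ↦ B₁ (B₂ p) - p` is strictly antitone, so it vanishes at most once.
-/

open Set

theorem strictAntiOn_comp_sub_self {α : Type*} [AddCommGroup α] [PartialOrder α]
    [IsOrderedAddMonoid α] {f g : α → α} {s t : Set α} (hgst : MapsTo g s t)
    (hg : MonotoneOn g s) (hf_offset : AntitoneOn (fun x => f x - x) t)
    (hg_offset : StrictAntiOn (fun x => g x - x) s) :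
    StrictAntiOn (fun x => f (g x) - x) s := by
  have hsum : StrictAntiOn (fun x => (f (g x) - g x) + (g x - x)) s :=
    (hf_offset.comp_MonotoneOn hg hgst).add_strictAnti hg_offset
  simpa only [sub_add_sub_cancel] using hsum

theorem eq_of_isFixedPt_comp {α : Type*} [AddCommGroup α] [LinearOrder α]
    [IsOrderedAddMonoid α] {f g : α → α} {s t : Set α} (hgst : MapsTo g s t)
    (hg : MonotoneOn g s) (hf_offset : AntitoneOn (fun x => f x - x) t)
    (hg_offset : StrictAntiOn (fun x => g x - x) s) {p q : α} (hp : p ∈ s) (hq : q ∈ s)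
    (hfp : Function.IsFixedPt (f ∘ g) p) (hfq : Function.IsFixedPt (f ∘ g) q) : p = q :=
  (strictAntiOn_comp_sub_self hgst hg hf_offset hg_offset).injOn hp hq <|
    (sub_eq_zero.2 hfp).trans (sub_eq_zero.2 hfq).symm

theorem pricing_equilibrium_unique_general
    (a b : ℝ)
    (B1 B2 : ℝ → ℝ)
    (hB2map : Set.MapsTo B2 (Set.Icc a b) (Set.Icc a b))
    (hB2mono : MonotoneOn B2 (Set.Icc a b))
    (hB1offset : StrictAntiOn (fun p => B1 p - p) (Set.Icc a b))
    (hB2offset : StrictAntiOn (fun p => B2 p - p) (Set.Icc a b)) :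
    ∀ p ∈ Set.Icc a b, ∀ q ∈ Set.Icc a b,
      B1 (B2 p) = p → B1 (B2 q) = q → p = q :=
  fun _ hp _ hq hfp hfq =>
    eq_of_isFixedPt_comp hB2map hB2mono hB1offset.antitoneOn hB2offset hp hq hfp hfq

theorem pricing_equilibrium_unique
    (a b : ℝ) (hab : a < b)
    (B1 B2 : ℝ → ℝ)
    (hB1map : Set.MapsTo B1 (Set.Icc a b) (Set.Icc a b))
    (hB2map : Set.MapsTo B2 (Set.Icc a b) (Set.Icc a b))
    (hB1mono : MonotoneOn B1 (Set.Icc a b))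
    (hB2mono : MonotoneOn B2 (Set.Icc a b))
    (hB1offset : StrictAntiOn (fun p => B1 p - p) (Set.Icc a b))
    (hB2offset : StrictAntiOn (fun p => B2 p - p) (Set.Icc a b)) :
    ∀ p ∈ Set.Icc a b, ∀ q ∈ Set.Icc a b,
      B1 (B2 p) = p → B1 (B2 q) = q → p = q :=
  pricing_equilibrium_unique_general a b B1 B2 hB2map hB2mono hB1offset hB2offset
end
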